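/- arXiv:2301.13306 — 3 statements merged into one kernel-verified Lean document; each statement's English description precedes it below -/
import Mathlib

section
/- In a single-item second-price auction with highest competing bid d > 0, where an agent with value v bids b(μ) = v/(1+μ), wins iff b(μ) ≥ d, and pays d upon winning: the ROI slack v·x(μ) − γ·p(μ) is weakly increasing in μ on the interval [0, γ−1], where x(μ) = 1 if v/(1+μ) ≥ d and 0 otherwise, and p(μ) = d·x(μ). -/
theorem roi_slack_monotone (v d γ : ℝ) (hv : 0 ≤ v) (hd : 0 < d) (hγ : 1 ≤ γ)
    (x p : ℝ → ℝ)
    (hx : ∀ μ, x μ = if v / (1 + μ) ≥ d then 1 else 0)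
    (hp : ∀ μ, p μ = d * x μ) :
    ∀ μ₁ ∈ Set.Icc (0 : ℝ) (γ - 1), ∀ μ₂ ∈ Set.Icc (0 : ℝ) (γ - 1),
      μ₁ ≤ μ₂ → v * x μ₁ - γ * p μ₁ ≤ v * x μ₂ - γ * p μ₂ := by
  intro μ₁ h₁ μ₂ h₂ hle
  obtain ⟨h10, h1g⟩ := h₁
  obtain ⟨h20, h2g⟩ := h₂
  have hpos1 : (0:ℝ) < 1 + μ₁ := by linarith
  have hpos2 : (0:ℝ) < 1 + μ₂ := by linarith
  rw [hp, hp, hx, hx]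
  by_cases hc1 : v / (1 + μ₁) ≥ d
  · by_cases hc2 : v / (1 + μ₂) ≥ d
    · simp [hc1, hc2]
    · simp only [hc1, hc2, if_true, if_false]
      -- v ≥ d(1+μ₁), v < d(1+μ₂) ≤ dγ
      have hv2 : v < d * (1 + μ₂) := by
        have := (div_lt_iff₀ hpos2).mp (lt_of_not_ge hc2)
        linarith
      have : v ≤ γ * d := by nlinarith
      nlinarith
  · have hc2 : ¬ v / (1 + μ₂) ≥ d := by
      intro h
      apply hc1
      have hv2 : d * (1 + μ₂) ≤ v := by
        have := (le_div_iff₀ hpos2).mp h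
        linarith
      rw [ge_iff_le, le_div_iff₀ hpos1]
      nlinarith
    simp [hc1, hc2]
end

section
/- Suppose γ ≥ 1, 0 ≤ v_t ≤ v̄ for all t, and η ≤ 1/v̄. Consider any sequences x_t ∈ [0,1] and p_t ≥ 0 satisfying p_t ≤ b_t x_t, where b_t = v_t/(1 + max{μ_t, 0}), μ_1 = γ − 1, and μ_{t+1} = μ_t − η(v_t x_t − γ p_t). Then for every T ≥ 1, Σ_{t=1}^T (v_t x_t − γ p_t) ≥ 0; i.e., the aggregate ROI constraint holds over every prefix. -/
theorem ex_post_roi (γ η vbar : ℝ) (hγ : 1 ≤ γ) (hvbar : 0 < vbar)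
    (hη : 0 < η) (hηb : η ≤ 1 / vbar)
    (v x p b μ : ℕ → ℝ)
    (hv : ∀ t, 0 ≤ v t ∧ v t ≤ vbar)
    (hx : ∀ t, 0 ≤ x t ∧ x t ≤ 1)
    (hb : ∀ t, b t = v t / (1 + max (μ t) 0))
    (hp : ∀ t, 0 ≤ p t ∧ p t ≤ b t * x t)
    (hμ1 : μ 1 = γ - 1)
    (hrec : ∀ t ≥ 1, μ (t + 1) = μ t - η * (v t * x t - γ * p t)) :
    ∀ T ≥ 1, (0 : ℝ) ≤ ∑ t ∈ Finset.Icc 1 T, (v t * x t - γ * p t) := by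
  -- invariant: μ t ≤ γ - 1 for all t ≥ 1
  have hηv : ∀ t, η * v t ≤ 1 := by
    intro t
    have h1 : η * v t ≤ η * vbar := by
      have := (hv t).2
      nlinarith
    have h2 : η * vbar ≤ 1 := by
      have := (le_div_iff₀ hvbar).mp hηb
      linarith
    linarith
  have hinv : ∀ t ≥ 1, μ t ≤ γ - 1 := by
    intro t ht
    induction t with
    | zero => omega
    | succ n ih =>
      rcases Nat.eq_or_lt_of_le ht with h | h
      · simp [← h, hμ1]
      · have hn : n ≥ 1 := by omega
        have ihn := ih hn
        set m := max (μ n) 0 with hm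
        have hm0 : (0:ℝ) ≤ m := le_max_right _ _
        have hmμ : μ n ≤ m := le_max_left _ _
        have hmle : m ≤ γ - 1 := by
          apply max_le ihn; linarith
        have hD : (0:ℝ) < 1 + m := by linarith
        have hpD : p n * (1 + m) ≤ v n * x n := by
          have h1 := (hp n).2
          rw [hb n] at h1
          have h2 : v n / (1 + m) * x n * (1 + m) = v n * x n := by
            field_simp
          calc p n * (1 + m) ≤ v n / (1 + m) * x n * (1 + m) := by
                apply mul_le_mul_of_nonneg_right h1 (le_of_lt hD)
            _ = v n * x n := h2
        have hrecn := hrec n hn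
        have hv0 := (hv n).1
        have hx0 := (hx n).1
        have hx1 := (hx n).2
        have hp0 := (hp n).1
        have hηvx : η * (v n * x n) ≤ 1 := by
          have h0 : 0 ≤ η * v n := mul_nonneg hη.le hv0
          nlinarith [hηv n]
        -- want: η * (γ * p n - v n * x n) ≤ γ - 1 - μ n
        have key : η * (γ * p n - v n * x n) ≤ γ - 1 - μ n := by
          rcases le_or_gt (γ * p n - v n * x n) 0 with hc | hc
          · nlinarith
          · -- multiply by (1+m)
            have h1 : γ * (p n * (1 + m)) ≤ γ * (v n * x n) := by
              apply mul_le_mul_of_nonneg_left hpD; linarith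
            -- η*(γ p - v x)*(1+m) ≤ η*v x*(γ-1-m) ≤ (γ-1-m) ≤ (γ-1-μ n)*(1+m)
            have h2 : η * (γ * p n - v n * x n) * (1 + m) ≤ η * (v n * x n) * (γ - 1 - m) := by
              nlinarith
            have h3 : η * (v n * x n) * (γ - 1 - m) ≤ γ - 1 - m := by
              nlinarith
            have h4 : γ - 1 - m ≤ (γ - 1 - μ n) * (1 + m) := by
              nlinarith
            have := le_trans h2 (le_trans h3 h4)
            exact le_of_mul_le_mul_right (by linarith) hD
        rw [hrecn]; linarith
  -- telescoping
  have htel : ∀ T ≥ 1, η * ∑ t ∈ Finset.Icc 1 T, (v t * x t - γ * p t) = μ 1 - μ (T + 1) := by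
    intro T hT
    induction T with
    | zero => omega
    | succ n ih =>
      rcases Nat.eq_or_lt_of_le hT with h | h
      · have h1 : n = 0 := by omega
        subst h1
        simp [hrec 1 le_rfl]
      · have hn : n ≥ 1 := by omega
        rw [Finset.sum_Icc_succ_top (by omega : 1 ≤ n + 1), mul_add, ih hn,
          hrec (n+1) (by omega)]
        ring
  intro T hT
  have h1 := htel T hT
  have h2 := hinv (T + 1) (by omega)
  have h3 : μ 1 - μ (T + 1) ≥ 0 := by rw [hμ1]; linarith
  nlinarith
end

section
/- Under the hypotheses of the ex-post ROI guarantee (γ ≥ 1, v_t ∈ [0, v̄], η ≤ 1/v̄, p_t ≤ b_t x_t with b_t = v_t/(1 + max{μ_t, 0}), μ_1 = γ − 1, μ_{t+1} = μ_t − η(v_t x_t − γ p_t)), the multipliers satisfy μ_t ≤ γ − 1 for every t. -/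
theorem multiplier_upper_bound (γ η vbar : ℝ) (hγ : 1 ≤ γ) (hvbar : 0 < vbar)
    (hη : 0 < η) (hηb : η ≤ 1 / vbar)
    (v x p b μ : ℕ → ℝ)
    (hv : ∀ t, 0 ≤ v t ∧ v t ≤ vbar)
    (hx : ∀ t, 0 ≤ x t ∧ x t ≤ 1)
    (hb : ∀ t, b t = v t / (1 + max (μ t) 0))
    (hp : ∀ t, 0 ≤ p t ∧ p t ≤ b t * x t)
    (hμ1 : μ 1 = γ - 1)
    (hrec : ∀ t ≥ 1, μ (t + 1) = μ t - η * (v t * x t - γ * p t)) :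
    ∀ t ≥ 1, μ t ≤ γ - 1 := by
  intro t ht
  induction t, ht using Nat.le_induction with
  | base => exact hμ1.le
  | succ n hn ih =>
    have hrecn := hrec n hn
    set m := max (μ n) 0 with hm
    have hm0 : (0:ℝ) ≤ m := le_max_right _ _
    have hm1 : (0:ℝ) < 1 + m := by linarith
    have hmle : m ≤ γ - 1 := max_le ih (by linarith)
    have hμnm : μ n ≤ m := le_max_left _ _
    obtain ⟨hv0, hv1⟩ := hv n
    obtain ⟨hx0, hx1⟩ := hx n
    obtain ⟨hp0, hp1⟩ := hp n
    have hA0 : 0 ≤ η * (v n * x n) := by positivity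
    have hA1 : η * (v n * x n) ≤ 1 := by
      have h1 : η * v n ≤ 1 := by
        calc η * v n ≤ (1/vbar) * vbar := by
              apply mul_le_mul hηb hv1 hv0 (by positivity)
          _ = 1 := by field_simp
      nlinarith
    have hp2 : p n ≤ v n * x n / (1 + m) := by
      rw [hb n] at hp1
      calc p n ≤ v n / (1 + m) * x n := hp1
        _ = v n * x n / (1 + m) := by ring
    -- multiply key inequality through by (1+m)
    have hγ0 : (0:ℝ) < γ := by linarith
    have key : η * (γ * p n) ≤ η * (v n * x n) * (γ / (1 + m)) := by
      have : γ * p n ≤ γ * (v n * x n / (1 + m)) :=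
        mul_le_mul_of_nonneg_left hp2 hγ0.le
      calc η * (γ * p n) ≤ η * (γ * (v n * x n / (1 + m))) :=
            mul_le_mul_of_nonneg_left this hη.le
        _ = η * (v n * x n) * (γ / (1 + m)) := by field_simp
    have step : μ (n+1) ≤ μ n + η * (v n * x n) * ((γ - 1 - m) / (1 + m)) := by
      have : γ / (1 + m) - 1 = (γ - 1 - m) / (1 + m) := by field_simp; ring
      rw [hrecn]
      nlinarith [key]
    have hfrac0 : 0 ≤ (γ - 1 - m) / (1 + m) := by
      apply div_nonneg (by linarith) hm1.le
    have hfrac1 : (γ - 1 - m) / (1 + m) ≤ γ - 1 - m := by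
      rw [div_le_iff₀ hm1]; nlinarith
    calc μ (n+1) ≤ μ n + η * (v n * x n) * ((γ - 1 - m) / (1 + m)) := step
      _ ≤ m + 1 * ((γ - 1 - m) / (1 + m)) := by
          have := mul_le_mul_of_nonneg_right hA1 hfrac0
          linarith
      _ ≤ m + (γ - 1 - m) := by linarith
      _ = γ - 1 := by ring
end
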